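/- arXiv:0912.3936 — 6 statements merged into one kernel-verified Lean document; each statement's English description precedes it below -/
import Mathlib

section
/- Let g : ℂ × ℝ^m → ℂ be uniformly continuous in ε for all ε in a ball U_{ε₀}(0) and k in a ball U_R(k₀), holomorphic in k on U_R(k₀) for each such ε, and suppose that g(k,ε) → (k - k₀)^d uniformly as ε → 0. Then there exist δ > 0 and ε₀' > 0 such that for every ε ∈ U_{ε₀'}(0) the sum of multiplicities of zeros of g(·,ε) in U_δ(k₀) equals d. -/
open Metric

/-!
Fix `ε` so small that `f = g(·, ε)` satisfies `‖f k - (k - k₀)^d‖ < r^d / 4` on the closed disc of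
radius `2r`, where `r = R/4`. Then every zero of `f` there lies in the disc of radius `r`, and on
the circles of radius `r` and `2r` the function `log ‖f‖` differs from `d · log` of the radius by
at most `log (4/3)`. By Jensen's formula, the difference of the circle averages of `log ‖f‖` over
these two circles is `N · log 2`, where `N` is the number of zeros counted with multiplicity (the
sum of the divisor of `f`). Hence `|N - d| · log 2 ≤ 2 log (4/3) < log 2`, so `N = d`.
-/

open MeromorphicOn Real Filter Topology

section Divisor

variable {𝕜 E : Type*} [NontriviallyNormedField 𝕜] [NormedAddCommGroup E] [NormedSpace 𝕜 E]
  {f : 𝕜 → E} {U V : Set 𝕜} {y z : 𝕜}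

theorem AnalyticOnNhd.divisor_eq_of_zeros_subset (hf : AnalyticOnNhd 𝕜 f V) (hUV : U ⊆ V)
    (hzeros : ∀ z ∈ V, f z = 0 → z ∈ U) : ⇑(divisor f U) = divisor f V := by
  funext z
  by_cases hzU : z ∈ U
  · rw [divisor_apply (hf.mono hUV).meromorphicOn hzU, divisor_apply hf.meromorphicOn (hUV hzU)]
  by_cases hzV : z ∈ V
  · have hfz : f z ≠ 0 := fun h => hzU (hzeros z hzV h)
    simp [hf.divisor_apply hzV, (hf z hzV).analyticOrderAt_eq_zero.2 hfz, hzU]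
  · simp [hzU, hzV]

theorem AnalyticOnNhd.analyticOrderAt_eq_toNat_divisor (hf : AnalyticOnNhd 𝕜 f U)
    (hz : divisor f U z ≠ 0) : analyticOrderAt f z = (divisor f U z).toNat := by
  have hzU : z ∈ U := (divisor f U).supportWithinDomain hz
  rw [hf.divisor_apply hzU] at hz ⊢
  cases h : analyticOrderAt f z with
  | top => simp [h] at hz
  | coe n => simp

theorem AnalyticOnNhd.toNat_divisor_pos (hf : AnalyticOnNhd 𝕜 f U) (hz : divisor f U z ≠ 0) :
    0 < (divisor f U z).toNat := by
  have : 0 ≤ divisor f U z := hf.divisor_nonneg z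
  omega

theorem AnalyticOnNhd.apply_eq_zero_of_divisor_ne_zero (hf : AnalyticOnNhd 𝕜 f U)
    (hz : divisor f U z ≠ 0) : f z = 0 :=
  apply_eq_zero_of_analyticOrderAt_ne_zero <| by
    rw [hf.analyticOrderAt_eq_toNat_divisor hz]
    exact_mod_cast (hf.toNat_divisor_pos hz).ne'

theorem AnalyticOnNhd.divisor_ne_zero_of_apply_eq_zero (hf : AnalyticOnNhd 𝕜 f U)
    (hU : IsPreconnected U) (hy : y ∈ U) (hfy : f y ≠ 0) (hz : z ∈ U) (hfz : f z = 0) :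
    divisor f U z ≠ 0 := by
  have htop : analyticOrderAt f z ≠ ⊤ := hf.analyticOrderAt_ne_top_of_isPreconnected hU hy hz
    (by simp [(hf y hy).analyticOrderAt_eq_zero.2 hfy])
  obtain ⟨n, hn⟩ := ENat.ne_top_iff_exists.1 htop
  have hn₀ : n ≠ 0 := by
    rintro rfl
    exact analyticOrderAt_ne_zero.2 ⟨hf z hz, hfz⟩ hn.symm
  simpa [hf.divisor_apply hz, ← hn] using hn₀

theorem AnalyticOnNhd.exists_eventuallyEq_pow_smul_of_divisor_ne_zero (hf : AnalyticOnNhd 𝕜 f U)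
    (hz : divisor f U z ≠ 0) :
    ∃ h : 𝕜 → E, AnalyticAt 𝕜 h z ∧ h z ≠ 0 ∧
      ∀ᶠ w in 𝓝 z, f w = (w - z) ^ (divisor f U z).toNat • h w :=
  (hf z ((divisor f U).supportWithinDomain hz)).analyticOrderAt_eq_natCast.1
    (hf.analyticOrderAt_eq_toNat_divisor hz)

end Divisor

section Jensen

variable {f : ℂ → ℂ} {c : ℂ} {r : ℝ} {d : ℕ}

theorem AnalyticOnNhd.circleAverage_log_norm_eq (hr : 0 < r)
    (hf : AnalyticOnNhd ℂ f (closedBall c r)) :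
    circleAverage (Real.log ‖f ·‖) c r
      = ∑ᶠ u, (divisor f (closedBall c r) u : ℝ) * (Real.log r - Real.log ‖c - u‖)
        + Real.log ‖meromorphicTrailingCoeffAt f c‖ := by
  have hf' : MeromorphicOn f (closedBall c |r|) := by rw [abs_of_pos hr]; exact hf.meromorphicOn
  rw [hf'.circleAverage_log_norm hr.ne', abs_of_pos hr, countingFunction_finsum_eq_finsum_add
    hr.ne' ((divisor f _).finiteSupport (isCompact_closedBall c r))]

theorem AnalyticOnNhd.circleAverage_log_norm_sub_of_zeros_subset {r₁ r₂ : ℝ}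
    (hr₁ : 0 < r₁) (hr : r₁ ≤ r₂) (hf : AnalyticOnNhd ℂ f (closedBall c r₂))
    (hzeros : ∀ z ∈ closedBall c r₂, f z = 0 → z ∈ closedBall c r₁) :
    circleAverage (Real.log ‖f ·‖) c r₂ - circleAverage (Real.log ‖f ·‖) c r₁
      = (∑ᶠ u, (divisor f (closedBall c r₂) u : ℝ)) * Real.log (r₂ / r₁) := by
  have hsub := closedBall_subset_closedBall (x := c) hr
  set D := divisor f (closedBall c r₂)
  have hD : ⇑(divisor f (closedBall c r₁)) = D := hf.divisor_eq_of_zeros_subset hsub hzeros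
  have hfin : (fun u => (D u : ℝ)).HasFiniteSupport :=
    (D.finiteSupport (isCompact_closedBall c r₂)).subset (by simp)
  rw [hf.circleAverage_log_norm_eq (hr₁.trans_le hr), (hf.mono hsub).circleAverage_log_norm_eq hr₁,
    hD, add_sub_add_right_eq_sub, ← finsum_sub_distrib (hfin.fun_mul_left _) (hfin.fun_mul_left _),
    finsum_mul, Real.log_div (hr₁.trans_le hr).ne' hr₁.ne']
  congr 1 with u
  ring

theorem abs_circleAverage_log_norm_sub_le {t : ℝ} (hr : 0 < r) (ht₀ : 0 ≤ t) (ht : t < 1)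
    (hf : MeromorphicOn f (sphere c r))
    (hclose : ∀ z ∈ sphere c r, ‖f z - (z - c) ^ d‖ ≤ t * r ^ d) :
    |circleAverage (Real.log ‖f ·‖) c r - d * Real.log r| ≤ -Real.log (1 - t) := by
  rw [← abs_of_pos hr] at hf
  have hrd : 0 < r ^ d := pow_pos hr d
  have hbounds : ∀ z ∈ sphere c |r|, (1 - t) * r ^ d ≤ ‖f z‖ ∧ ‖f z‖ ≤ (1 + t) * r ^ d := by
    intro z hz
    rw [abs_of_pos hr] at hz
    have hzc : ‖(z - c) ^ d‖ = r ^ d := by rw [norm_pow, mem_sphere_iff_norm.1 hz]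
    have h₁ := norm_sub_norm_le ((z - c) ^ d) (f z)
    have h₂ := norm_le_norm_add_norm_sub' (f z) ((z - c) ^ d)
    rw [norm_sub_rev] at h₁
    constructor <;> linarith [hclose z hz]
  have hlog : ∀ s : ℝ, 0 < s → Real.log (s * r ^ d) = Real.log s + d * Real.log r := fun s hs => by
    rw [Real.log_mul hs.ne' hrd.ne', Real.log_pow]
  have hlower : Real.log (1 - t) + d * Real.log r ≤ circleAverage (Real.log ‖f ·‖) c r := by
    rw [← hlog _ (by linarith), ← circleAverage_const (Real.log ((1 - t) * r ^ d)) c r]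
    exact circleAverage_mono (circleIntegrable_const _ c r) hf.circleIntegrable_log_norm
      fun z hz => Real.log_le_log (by nlinarith) (hbounds z hz).1
  have hupper : circleAverage (Real.log ‖f ·‖) c r ≤ Real.log (1 + t) + d * Real.log r := by
    rw [← hlog _ (by linarith)]
    refine circleAverage_mono_on_of_le_circle hf.circleIntegrable_log_norm
      fun z hz => Real.log_le_log ?_ (hbounds z hz).2
    nlinarith [hbounds z hz]
  have hlog_add : Real.log (1 + t) ≤ -Real.log (1 - t) := by
    have : Real.log (1 + t) + Real.log (1 - t) ≤ 0 := by
      rw [← Real.log_mul (by linarith) (by linarith)]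
      exact Real.log_nonpos (by nlinarith) (by nlinarith)
    linarith
  rw [abs_sub_le_iff]
  constructor <;> linarith

theorem mem_ball_of_apply_eq_zero {z : ℂ} (hr : 0 ≤ r) (hclose : ‖f z - (z - c) ^ d‖ < r ^ d)
    (hz : f z = 0) : z ∈ ball c r := by
  rw [hz, zero_sub, norm_neg, norm_pow] at hclose
  rw [mem_ball, dist_eq_norm]
  exact lt_of_pow_lt_pow_left₀ d hr hclose

theorem finsum_divisor_eq_of_norm_sub_pow_lt (hr : 0 < r)
    (hf : AnalyticOnNhd ℂ f (closedBall c (2 * r)))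
    (hclose : ∀ z ∈ closedBall c (2 * r), ‖f z - (z - c) ^ d‖ < r ^ d / 4) :
    ∑ᶠ u, divisor f (closedBall c (2 * r)) u = d := by
  have hrd : r ^ d ≤ (2 * r) ^ d := pow_le_pow_left₀ hr.le (by linarith) d
  have hzeros : ∀ z ∈ closedBall c (2 * r), f z = 0 → z ∈ closedBall c r := fun z hz h0 =>
    ball_subset_closedBall <| mem_ball_of_apply_eq_zero hr.le
      ((hclose z hz).trans (by linarith [pow_pos hr d])) h0
  have hjensen := hf.circleAverage_log_norm_sub_of_zeros_subset hr (by linarith) hzeros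
  have hsphere : ∀ s ≤ 2 * r, sphere c s ⊆ closedBall c (2 * r) := fun s hs =>
    sphere_subset_closedBall.trans (closedBall_subset_closedBall hs)
  have h₁ := abs_circleAverage_log_norm_sub_le (t := 1 / 4) (d := d) hr (by norm_num) (by norm_num)
    (hf.mono (hsphere r (by linarith))).meromorphicOn
    fun z hz => by linarith [hclose z (hsphere r (by linarith) hz)]
  have h₂ := abs_circleAverage_log_norm_sub_le (t := 1 / 4) (d := d) (by linarith : 0 < 2 * r)
    (by norm_num) (by norm_num) (hf.mono (hsphere _ le_rfl)).meromorphicOn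
    fun z hz => by linarith [hclose z (hsphere _ le_rfl hz)]
  set N := ∑ᶠ u, divisor f (closedBall c (2 * r)) u
  have hN : ∑ᶠ u, (divisor f (closedBall c (2 * r)) u : ℝ) = N :=
    (map_finsum (Int.castRingHom ℝ) ((divisor f _).finiteSupport (isCompact_closedBall _ _))).symm
  rw [hN, mul_div_cancel_right₀ 2 hr.ne'] at hjensen
  have hlog2 : 0 < Real.log 2 := Real.log_pos one_lt_two
  -- `2 log (4/3) < log 2`, i.e. `16/9 < 2`
  have hlog : 2 * -Real.log (1 - 1 / 4) < Real.log 2 := by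
    have h := Real.log_pos (show (1 : ℝ) < (1 - 1 / 4) ^ 2 * 2 by norm_num)
    rw [Real.log_mul (by norm_num) two_ne_zero, Real.log_pow] at h
    push_cast at h
    linarith
  have hgap : |((N - d : ℤ) : ℝ)| * Real.log 2 < Real.log 2 := by
    have hsplit : ((N - d : ℤ) : ℝ) * Real.log 2
        = (circleAverage (Real.log ‖f ·‖) c (2 * r) - d * Real.log (2 * r))
          - (circleAverage (Real.log ‖f ·‖) c r - d * Real.log r) := by
      rw [Real.log_mul two_ne_zero hr.ne']
      push_cast
      linear_combination -hjensen
    calc |((N - d : ℤ) : ℝ)| * Real.log 2 = |((N - d : ℤ) : ℝ) * Real.log 2| := by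
          rw [abs_mul, abs_of_pos hlog2]
      _ ≤ _ := hsplit ▸ abs_sub _ _
      _ ≤ 2 * -Real.log (1 - 1 / 4) := by linarith
      _ < Real.log 2 := hlog
  have : |N - d| < 1 := by exact_mod_cast (mul_lt_iff_lt_one_left hlog2).1 hgap
  exact sub_eq_zero.1 (Int.abs_lt_one_iff.1 this)

theorem exists_zeros_sum_mult_eq_of_norm_sub_pow_lt (hr : 0 < r)
    (hf : AnalyticOnNhd ℂ f (closedBall c (2 * r)))
    (hclose : ∀ z ∈ closedBall c (2 * r), ‖f z - (z - c) ^ d‖ < r ^ d / 4) :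
    ∃ (Z : Finset ℂ) (mult : ℂ → ℕ),
      (∀ z ∈ Z, z ∈ ball c r) ∧
      (∀ z ∈ ball c r, f z = 0 → z ∈ Z) ∧
      (∀ z ∈ Z, 0 < mult z ∧ ∃ h : ℂ → ℂ, AnalyticAt ℂ h z ∧ h z ≠ 0 ∧
        ∀ᶠ w in 𝓝 z, f w = (w - z) ^ (mult z) * h w) ∧
      Z.sum mult = d := by
  set D := divisor f (closedBall c (2 * r))
  have hfin := D.finiteSupport (isCompact_closedBall c (2 * r))
  have hzeros : ∀ z ∈ closedBall c (2 * r), f z = 0 → z ∈ ball c r := fun z hz h0 =>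
    mem_ball_of_apply_eq_zero hr.le ((hclose z hz).trans (by linarith [pow_pos hr d])) h0
  refine ⟨hfin.toFinset, fun z => (D z).toNat, fun z hz => ?_, fun z hz h0 => ?_,
    fun z hz => ?_, ?_⟩
  · rw [Set.Finite.mem_toFinset] at hz
    exact hzeros z (D.supportWithinDomain hz) (hf.apply_eq_zero_of_divisor_ne_zero hz)
  · have hz' : z ∈ closedBall c (2 * r) :=
      closedBall_subset_closedBall (by linarith) (ball_subset_closedBall hz)
    have hy : c + r ∈ closedBall c (2 * r) := by
      simp only [mem_closedBall, dist_self_add_left, Complex.norm_real, Real.norm_eq_abs,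
        abs_of_pos hr]
      linarith
    have hfy : f (c + r) ≠ 0 := fun h0 => by simpa [abs_of_pos hr] using hzeros _ hy h0
    rw [Set.Finite.mem_toFinset]
    exact hf.divisor_ne_zero_of_apply_eq_zero (convex_closedBall c _).isPreconnected hy hfy hz' h0
  · rw [Set.Finite.mem_toFinset] at hz
    exact ⟨hf.toNat_divisor_pos hz, hf.exists_eventuallyEq_pow_smul_of_divisor_ne_zero hz⟩
  · have hsum : ∑ z ∈ hfin.toFinset, D z = d := by
      rw [← finsum_eq_sum_of_support_subset _ (by simp)]
      exact finsum_divisor_eq_of_norm_sub_pow_lt hr hf hclose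
    zify
    rw [← hsum]
    exact Finset.sum_congr rfl fun z _ => Int.toNat_of_nonneg (hf.divisor_nonneg z)

end Jensen

theorem zeros_count_stable_general
    (m : ℕ) (g : ℂ × (Fin m → ℝ) → ℂ) (k₀ : ℂ) (d : ℕ)
    (ε₀ R : ℝ) (hε₀ : 0 < ε₀) (hR : 0 < R)
    (hhol : ∀ ε : Fin m → ℝ, ‖ε‖ < ε₀ →
      DifferentiableOn ℂ (fun k => g (k, ε)) (ball k₀ R))
    (hlim : ∀ η > (0:ℝ), ∃ δ > (0:ℝ), ∀ ε : Fin m → ℝ, ‖ε‖ < δ →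
      ∀ k ∈ ball k₀ R, ‖g (k, ε) - (k - k₀) ^ d‖ < η) :
    ∃ δ > (0:ℝ), ∃ ε₀' > (0:ℝ), ∀ ε : Fin m → ℝ, ‖ε‖ < ε₀' →
      ∃ (Z : Finset ℂ) (mult : ℂ → ℕ),
        (∀ z ∈ Z, z ∈ ball k₀ δ) ∧
        (∀ z ∈ ball k₀ δ, g (z, ε) = 0 → z ∈ Z) ∧
        (∀ z ∈ Z, 0 < mult z ∧ ∃ h : ℂ → ℂ, AnalyticAt ℂ h z ∧ h z ≠ 0 ∧
          ∀ᶠ w in nhds z, g (w, ε) = (w - z) ^ (mult z) * h w) ∧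
        Z.sum mult = d := by
  have hball : closedBall k₀ (2 * (R / 4)) ⊆ ball k₀ R := closedBall_subset_ball (by linarith)
  obtain ⟨δ', hδ', hδ'_lim⟩ := hlim ((R / 4) ^ d / 4) (by positivity)
  refine ⟨R / 4, by positivity, min δ' ε₀, lt_min hδ' hε₀, fun ε hε => ?_⟩
  have hf : AnalyticOnNhd ℂ (fun k => g (k, ε)) (closedBall k₀ (2 * (R / 4))) :=
    ((hhol ε (hε.trans_le (min_le_right _ _))).analyticOnNhd isOpen_ball).mono hball
  exact exists_zeros_sum_mult_eq_of_norm_sub_pow_lt (by positivity) hf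
    fun z hz => hδ'_lim ε (hε.trans_le (min_le_left _ _)) z (hball hz)

/-- Lemma 1 of the paper: stability of the number of zeros (counted with
multiplicity) of a family `g(·, ε)` converging uniformly to `(k - k₀)^d`. -/
theorem zeros_count_stable
    (m : ℕ) (g : ℂ × (Fin m → ℝ) → ℂ) (k₀ : ℂ) (d : ℕ)
    (ε₀ R : ℝ) (hε₀ : 0 < ε₀) (hR : 0 < R)
    (hhol : ∀ ε : Fin m → ℝ, ‖ε‖ < ε₀ →
      DifferentiableOn ℂ (fun k => g (k, ε)) (ball k₀ R))
    (hucont : ∀ η > (0:ℝ), ∃ δ > (0:ℝ), ∀ ε₁ ε₂ : Fin m → ℝ, ‖ε₁‖ < ε₀ → ‖ε₂‖ < ε₀ →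
      ‖ε₁ - ε₂‖ < δ → ∀ k ∈ ball k₀ R, ‖g (k, ε₁) - g (k, ε₂)‖ < η)
    (hlim : ∀ η > (0:ℝ), ∃ δ > (0:ℝ), ∀ ε : Fin m → ℝ, ‖ε‖ < δ →
      ∀ k ∈ ball k₀ R, ‖g (k, ε) - (k - k₀) ^ d‖ < η) :
    ∃ δ > (0:ℝ), ∃ ε₀' > (0:ℝ), ∀ ε : Fin m → ℝ, ‖ε‖ < ε₀' →
      ∃ (Z : Finset ℂ) (mult : ℂ → ℕ),
        (∀ z ∈ Z, z ∈ ball k₀ δ) ∧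
        (∀ z ∈ ball k₀ δ, g (z, ε) = 0 → z ∈ Z) ∧
        (∀ z ∈ Z, 0 < mult z ∧ ∃ h : ℂ → ℂ, AnalyticAt ℂ h z ∧ h z ≠ 0 ∧
          ∀ᶠ w in nhds z, g (w, ε) = (w - z) ^ (mult z) * h w) ∧
        Z.sum mult = d :=
  zeros_count_stable_general m g k₀ d ε₀ R hε₀ hR hhol hlim
end

section
/- Let n ≥ 2 and consider the (2n + r) × 2n real matrix M whose first 2n rows form the block tridiagonal-like matrix with rows (b₁, -1, 0, …, 0), (-1, b₂, 0, …, 0), (0, 0, b₂, -1, 0, …, 0), (0, 0, -1, b₃, 0, …, 0), …, (0, …, 0, b_n, 0, 0), (0, …, 0, 0, b_n, -1), (0, …, 0, 0, -1, b₁), followed by rows (1, 0, …, 0, 1), (0, 1, 1, 0, …, 0), …, (0, …, 0, 1, 1, 0). If b_j = -1 for all j, then M has rank strictly less than 2n. -/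
/-!
With every `b j = -1`, each row of `M` has exactly two nonzero entries, equal to each other and
sitting in one even and one odd column (the wrap-around column `(2j + 2) % 2n` is even). So the
alternating vector `c ↦ (-1) ^ c` is a nonzero vector in the kernel of `M`.
-/

open Matrix

theorem Matrix.rank_lt_card_of_mulVec_eq_zero {m n K : Type*} [Fintype m] [Fintype n] [Field K]
    {M : Matrix m n K} {v : n → K} (hv : v ≠ 0) (hMv : M *ᵥ v = 0) :
    M.rank < Fintype.card n := by
  have hker : 0 < Module.finrank K (LinearMap.ker M.mulVecLin) :=
    Module.finrank_pos_iff_exists_ne_zero.mpr ⟨⟨v, hMv⟩, fun h => hv (congrArg Subtype.val h)⟩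
  have := LinearMap.finrank_range_add_finrank_ker M.mulVecLin
  rw [Module.finrank_fintype_fun_eq_card] at this
  rw [Matrix.rank]
  omega

theorem Matrix.mulVec_apply_eq_of_row_eq_ite {ι R : Type*} [NonUnitalNonAssocSemiring R] {m : ℕ}
    {M : Matrix ι (Fin m) R} {i : ι} {x y : ℕ} (hxy : x ≠ y) (hx : x < m) (hy : y < m) {p q : R}
    (hrow : ∀ c : Fin m, M i c = if (c : ℕ) = x then p else if (c : ℕ) = y then q else 0)
    (w : ℕ → R) : (M *ᵥ fun c => w c) i = p * w x + q * w y := by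
  have split : ∀ k, (if k = x then p else if k = y then q else 0) * w k =
      (if k = x then p * w x else 0) + (if k = y then q * w y else 0) := by
    intro k
    by_cases hkx : k = x
    · subst hkx; simp [hxy]
    · by_cases hky : k = y
      · subst hky; simp [hkx]
      · simp [hkx, hky]
  simp only [mulVec, dotProduct, hrow]
  rw [Fin.sum_univ_eq_sum_range (fun k => (if k = x then p else if k = y then q else 0) * w k)]
  simp [split, Finset.sum_add_distrib, hx, hy]

/-- The reduced rank condition for a loop of `n` edges with permutation-invariant
couplings: if `b_j = -1` for all `j` (δ-couplings), the `(2n+r) × 2n` matrix built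
from the loop structure has rank less than `2n`. -/
theorem loop_delta_rank_lt
    (n r : ℕ) (hn : 2 ≤ n) (b : Fin n → ℝ)
    (M : Matrix (Fin (2 * n + r)) (Fin (2 * n)) ℝ)
    (h1 : ∀ (i : Fin (2 * n + r)) (j : Fin n), (i : ℕ) = 2 * (j : ℕ) →
      ∀ c : Fin (2 * n), M i c =
        if (c : ℕ) = 2 * (j : ℕ) then b j
        else if (c : ℕ) = 2 * (j : ℕ) + 1 then -1 else 0)
    (h2 : ∀ (i : Fin (2 * n + r)) (j : Fin n), (i : ℕ) = 2 * (j : ℕ) + 1 →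
      ∀ c : Fin (2 * n), M i c =
        if (c : ℕ) = 2 * (j : ℕ) then -1
        else if (c : ℕ) = 2 * (j : ℕ) + 1 then
          b ⟨((j : ℕ) + 1) % n, Nat.mod_lt _ (by omega)⟩
        else 0)
    (h3 : ∀ i : Fin (2 * n + r), 2 * n ≤ (i : ℕ) → ∃ j : Fin n,
      ∀ c : Fin (2 * n), M i c =
        if (c : ℕ) = 2 * (j : ℕ) + 1 ∨ (c : ℕ) = (2 * (j : ℕ) + 2) % (2 * n)
        then 1 else 0)
    (hb : ∀ j, b j = -1) :
    M.rank < 2 * n := by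
  let v : Fin (2 * n) → ℝ := fun c => (-1) ^ (c : ℕ)
  have hv : v ≠ 0 := fun h => by simpa [v] using congrFun h ⟨0, by omega⟩
  have hMv : M *ᵥ v = 0 := by
    funext i
    rcases lt_or_ge (i : ℕ) (2 * n) with hi | hi
    · obtain ⟨j, hj⟩ := Nat.even_or_odd' (i : ℕ)
      have hjn : j < n := by omega
      rcases hj with hj | hj
      · rw [mulVec_apply_eq_of_row_eq_ite (by omega) (by omega) (by omega) (h1 i ⟨j, hjn⟩ hj)]
        simp [hb, pow_succ, pow_mul]
      · rw [mulVec_apply_eq_of_row_eq_ite (by omega) (by omega) (by omega) (h2 i ⟨j, hjn⟩ hj)]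
        simp [hb, pow_succ, pow_mul]
    · obtain ⟨j, hrow⟩ := h3 i hi
      have heven : (2 * j + 2) % (2 * n) % 2 = 0 := by
        rw [Nat.mod_mod_of_dvd _ (dvd_mul_right 2 n)]; omega
      rw [mulVec_apply_eq_of_row_eq_ite (x := 2 * j + 1) (y := (2 * j + 2) % (2 * n)) (by omega)
        (by omega) (Nat.mod_lt _ (by omega)) fun c => (hrow c).trans (ite_or _ _ _ _)]
      simp [(Nat.even_iff.mpr heven).neg_one_pow, pow_succ, pow_mul]
  simpa using rank_lt_card_of_mulVec_eq_zero hv hMv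
end

section
/- Let n ≥ 1 and consider the 2n × 2n real matrix M with rows (1,1,0,…,0), (0,1,-1,0,…,0), (0,0,1,1,0,…,0), (0,0,0,1,-1,0,…,0), …, (0,…,0,1,-1,0), (0,…,0,1,1), (-1,0,…,0,1) (alternating pattern with wrap-around in the last row). Then rank M < 2n if and only if n is even. -/
/-!
A kernel vector `v` of the matrix satisfies `v (i + 1) = -(-1) ^ i * v i` around the cycle
`Fin (2 * n)`, so it is determined by `v 0`, and going once around the cycle multiplies `v 0` by
`∏ k < 2n, -(-1) ^ k = (-1) ^ n`. A nonzero kernel vector therefore exists iff `(-1) ^ n = 1`,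
i.e. iff `n` is even.
-/

open Finset Matrix Fin.NatCast

theorem Matrix.rank_lt_card_width_iff_exists_mulVec_eq_zero {m n K : Type*} [Fintype n] [Field K]
    (A : Matrix m n K) : A.rank < Fintype.card n ↔ ∃ v ≠ 0, A *ᵥ v = 0 := by
  have nullity : A.rank + Module.finrank K (LinearMap.ker A.mulVecLin) = Fintype.card n := by
    rw [Matrix.rank, LinearMap.finrank_range_add_finrank_ker, Module.finrank_fintype_fun_eq_card]
  rw [← nullity, Nat.lt_add_right_iff_pos, Module.finrank_pos_iff_exists_ne_zero]
  simp only [ne_eq, Subtype.exists, LinearMap.mem_ker, mulVecLin_apply, Submodule.mk_eq_zero,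
    exists_prop]
  exact exists_congr fun v => and_comm

section CyclicRecurrence

variable {R : Type*} [CommRing R] {N : ℕ} [NeZero N] {w : ℕ → R}

theorem apply_natCast_eq_prod_range_mul {v : Fin N → R} (hv : ∀ i : Fin N, v (i + 1) = w i * v i) :
    ∀ j ≤ N, v (j : Fin N) = (∏ k ∈ range j, w k) * v 0 := by
  intro j hj
  induction j with
  | zero => simp
  | succ j ih =>
    rw [Nat.cast_succ, hv, Fin.val_cast_of_lt (by omega), ih (by omega), prod_range_succ]
    ring

theorem exists_ne_zero_forall_apply_add_one_eq_mul_iff [IsDomain R] :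
    (∃ v : Fin N → R, v ≠ 0 ∧ ∀ i : Fin N, v (i + 1) = w i * v i) ↔ ∏ k ∈ range N, w k = 1 := by
  constructor
  · rintro ⟨v, hv0, hv⟩
    have hprop := apply_natCast_eq_prod_range_mul hv
    have h0 : v 0 ≠ 0 := by
      refine fun h0 => hv0 (funext fun i => ?_)
      rw [← Fin.cast_val_eq_self i, hprop i i.is_lt.le, h0, mul_zero, Pi.zero_apply]
    have := hprop N le_rfl
    rw [Fin.natCast_self] at this
    exact (mul_eq_right₀ h0).mp this.symm
  · intro hprod
    refine ⟨fun i => ∏ k ∈ range i, w k, fun h => ?_, fun i => ?_⟩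
    · simpa using congrFun h 0
    · dsimp only
      rw [mul_comm, ← prod_range_succ]
      obtain h | h : (i : ℕ) + 1 < N ∨ (i : ℕ) + 1 = N := by omega
      · rw [Fin.val_add_one_of_lt' h]
      · rw [Fin.val_add, Fin.val_one', Nat.add_mod_mod, h, Nat.mod_self, hprod, prod_range_zero]

end CyclicRecurrence

section AlternatingCycleMatrix

variable (R : Type*) [CommRing R] (N : ℕ) [NeZero N]

/-- Row `i` is `e i + (-1) ^ i • e (i + 1)`; addition in `Fin N` wraps around, so the last row
has its second entry in column `0`. -/
def alternatingCycleMatrix : Matrix (Fin N) (Fin N) R :=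
  Matrix.of fun i => Pi.single i 1 + Pi.single (i + 1) ((-1) ^ (i : ℕ))

variable {R N}

theorem alternatingCycleMatrix_mulVec_eq_zero_iff (v : Fin N → R) :
    alternatingCycleMatrix R N *ᵥ v = 0 ↔ ∀ i : Fin N, v (i + 1) = -(-1) ^ (i : ℕ) * v i := by
  refine funext_iff.trans (forall_congr' fun i => ?_)
  have hsq : ((-1 : R) ^ (i : ℕ)) ^ 2 = 1 := by rw [← pow_mul, pow_mul', neg_one_sq, one_pow]
  change (Pi.single i 1 + Pi.single (i + 1) ((-1 : R) ^ (i : ℕ))) ⬝ᵥ v = 0 ↔ _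
  rw [add_dotProduct, single_dotProduct, single_dotProduct, one_mul]
  constructor <;> intro h
  · linear_combination (-1) ^ (i : ℕ) * h - v (i + 1) * hsq
  · linear_combination (-1) ^ (i : ℕ) * h - v i * hsq

theorem alternatingCycleMatrix_two_mul_apply {n : ℕ} [NeZero n] (i c : Fin (2 * n)) :
    alternatingCycleMatrix R (2 * n) i c =
      if (i : ℕ) % 2 = 0 then
        (if (c : ℕ) = (i : ℕ) ∨ (c : ℕ) = (i : ℕ) + 1 then 1 else 0)
      else
        (if (c : ℕ) = (i : ℕ) then 1
         else if (c : ℕ) = ((i : ℕ) + 1) % (2 * n) then -1 else 0) := by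
  have hsucc : ((i + 1 : Fin (2 * n)) : ℕ) = ((i : ℕ) + 1) % (2 * n) := by
    rw [Fin.val_add, Fin.val_one', Nat.add_mod_mod]
  have hi := i.is_lt
  have hn := NeZero.ne n
  simp only [alternatingCycleMatrix, of_apply, Pi.add_apply, Pi.single_apply, Fin.ext_iff, hsucc]
  rcases Nat.even_or_odd (i : ℕ) with he | ho
  · have := Nat.even_iff.mp he
    rw [he.neg_one_pow, Nat.mod_eq_of_lt (by omega)]
    split_ifs <;> first | omega | simp
  · have := Nat.odd_iff.mp ho
    have hne : ((i : ℕ) + 1) % (2 * n) ≠ i := by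
      obtain h | h : (i : ℕ) + 1 < 2 * n ∨ (i : ℕ) + 1 = 2 * n := by omega
      · rw [Nat.mod_eq_of_lt h]; omega
      · rw [h, Nat.mod_self]; omega
    rw [ho.neg_one_pow]
    split_ifs <;> first | omega | simp

theorem prod_range_two_mul_neg_neg_one_pow (n : ℕ) :
    ∏ k ∈ range (2 * n), -(-1 : R) ^ k = (-1) ^ n := by
  induction n with
  | zero => simp
  | succ n ih => simp [Nat.mul_succ, prod_range_succ, ih, pow_succ, pow_mul]

theorem rank_alternatingCycleMatrix_two_mul_lt_iff {K : Type*} [Field K] (hK : (-1 : K) ≠ 1)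
    (n : ℕ) [NeZero n] :
    (alternatingCycleMatrix K (2 * n)).rank < 2 * n ↔ Even n := by
  refine (Fintype.card_fin (2 * n) ▸ rank_lt_card_width_iff_exists_mulVec_eq_zero _).trans ?_
  simp_rw [alternatingCycleMatrix_mulVec_eq_zero_iff]
  rw [exists_ne_zero_forall_apply_add_one_eq_mul_iff (w := fun k => -(-1) ^ k),
    prod_range_two_mul_neg_neg_one_pow, neg_one_pow_eq_one_iff_even hK]

end AlternatingCycleMatrix

/-- The `2n × 2n` matrix arising from a loop of `n` edges with `δ'_s` couplings
(rows alternating `(…,1,1,…)` and `(…,1,-1,…)` with wrap-around in the last row)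
has rank `< 2n` if and only if `n` is even. -/
theorem loop_delta_prime_rank_iff
    (n : ℕ) (hn : 1 ≤ n)
    (M : Matrix (Fin (2 * n)) (Fin (2 * n)) ℝ)
    (hM : ∀ i c : Fin (2 * n), M i c =
      if (i : ℕ) % 2 = 0 then
        (if (c : ℕ) = (i : ℕ) ∨ (c : ℕ) = (i : ℕ) + 1 then 1 else 0)
      else
        (if (c : ℕ) = (i : ℕ) then 1
         else if (c : ℕ) = ((i : ℕ) + 1) % (2 * n) then -1 else 0)) :
    M.rank < 2 * n ↔ Even n := by
  have : NeZero n := ⟨by omega⟩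
  obtain rfl : M = alternatingCycleMatrix ℝ (2 * n) :=
    Matrix.ext fun i c => (hM i c).trans (alternatingCycleMatrix_two_mul_apply i c).symm
  exact rank_alternatingCycleMatrix_two_mul_lt_iff (by norm_num) n
end

section
/- Let α ∈ ℝ, α ≠ 0, l > 0, λ ∈ [0,1]. A nonzero real number k solves 2k sin(2kl) + (α - 2ik)(cos(2klλ) - cos(2kl)) = 0 if and only if kl = nπ/2 for some nonzero integer n and nλ = n - 2m for some integer m (equivalently λ = 1 - 2m/n). In particular, real nonzero solutions require both sin(2kl) = 0 and cos(2klλ) = cos(2kl). -/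
/-!
For real `k`, `l`, `λ` all sines and cosines involved are real, so the real and imaginary
parts of the equation vanish separately. The imaginary part `-2k (cos 2klλ - cos 2kl)` forces
the two cosines to agree, after which the real part is `2k sin 2kl`, so `2kl = nπ`; finally
`cos (nλπ) = cos (nπ)` says that `nλ` differs from `±n` by an even integer.
-/

open Complex in
theorem ofReal_mul_add_sub_I_mul_eq_zero_iff {α k s d : ℝ} (hk : k ≠ 0) :
    2 * (k : ℂ) * s + (α - 2 * I * k) * d = 0 ↔ s = 0 ∧ d = 0 := by
  simp only [Complex.ext_iff, add_re, add_im, mul_re, mul_im, sub_re, sub_im, ofReal_re,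
    ofReal_im, I_re, I_im, re_ofNat, im_ofNat, zero_re, zero_im]
  constructor
  · rintro ⟨hre, him⟩
    have hd : d = 0 := by
      simpa [hk] using him
    subst hd
    simpa [hk] using hre
  · rintro ⟨rfl, rfl⟩
    simp

namespace Real

theorem cos_mul_pi_eq_cos_int_mul_pi_iff (t : ℝ) (n : ℤ) :
    cos (t * π) = cos (n * π) ↔ ∃ m : ℤ, t = n - 2 * m := by
  rw [cos_eq_cos_iff]
  constructor
  · rintro ⟨j, h | h⟩
    · exact ⟨j, mul_right_cancel₀ pi_ne_zero (by linear_combination -h)⟩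
    · exact ⟨n - j, mul_right_cancel₀ pi_ne_zero (by push_cast; linear_combination h)⟩
  · rintro ⟨m, rfl⟩
    exact ⟨m, Or.inl (by ring)⟩

end Real

open Real in
theorem cross_real_solutions_general
    (α l lam k : ℝ) (hl : 0 < l) (hk : k ≠ 0) :
    (2 * (k : ℂ) * Complex.sin (2 * (k : ℂ) * (l : ℂ))
        + ((α : ℂ) - 2 * Complex.I * (k : ℂ))
          * (Complex.cos (2 * (k : ℂ) * (l : ℂ) * (lam : ℂ))
              - Complex.cos (2 * (k : ℂ) * (l : ℂ))) = 0
      ↔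
      ∃ n : ℤ, n ≠ 0 ∧ k * l = (n : ℝ) * Real.pi / 2 ∧
        ∃ m : ℤ, (n : ℝ) * lam = (n : ℝ) - 2 * (m : ℝ)) := by
  rw [show 2 * (k : ℂ) * Complex.sin (2 * k * l) + (α - 2 * Complex.I * k)
        * (Complex.cos (2 * k * l * lam) - Complex.cos (2 * k * l))
      = 2 * (k : ℂ) * (sin (2 * k * l) : ℝ) + (α - 2 * Complex.I * k)
        * (cos (2 * k * l * lam) - cos (2 * k * l) : ℝ) by push_cast; rfl,
    ofReal_mul_add_sub_I_mul_eq_zero_iff hk, sub_eq_zero, sin_eq_zero_iff]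
  constructor
  · rintro ⟨⟨n, hn⟩, hcos⟩
    have hn0 : n ≠ 0 := by
      rintro rfl
      simp_all
    rw [← hn, show (n : ℝ) * π * lam = (n * lam) * π by ring,
      cos_mul_pi_eq_cos_int_mul_pi_iff] at hcos
    exact ⟨n, hn0, by linarith, hcos⟩
  · rintro ⟨n, -, hn, hcos⟩
    rw [show 2 * k * l = n * π by linarith, show (n : ℝ) * π * lam = (n * lam) * π by ring,
      cos_mul_pi_eq_cos_int_mul_pi_iff]
    exact ⟨⟨n, rfl⟩, hcos⟩

/-- Characterization of real nonzero solutions of the cross-shaped resonator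
condition: `k` solves `2k sin(2kl) + (α - 2ik)(cos(2klλ) - cos(2kl)) = 0`
iff `kl = nπ/2` for some nonzero integer `n` and `nλ = n - 2m` for some
integer `m`. -/
theorem cross_real_solutions
    (α l lam k : ℝ) (hα : α ≠ 0) (hl : 0 < l)
    (hlam : lam ∈ Set.Icc (0 : ℝ) 1) (hk : k ≠ 0) :
    (2 * (k : ℂ) * Complex.sin (2 * (k : ℂ) * (l : ℂ))
        + ((α : ℂ) - 2 * Complex.I * (k : ℂ))
          * (Complex.cos (2 * (k : ℂ) * (l : ℂ) * (lam : ℂ))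
              - Complex.cos (2 * (k : ℂ) * (l : ℂ))) = 0
      ↔
      ∃ n : ℤ, n ≠ 0 ∧ k * l = (n : ℝ) * Real.pi / 2 ∧
        ∃ m : ℤ, (n : ℝ) * lam = (n : ℝ) - 2 * (m : ℝ)) :=
  cross_real_solutions_general α l lam k hl hk
end

section
/- Let U be a 2N×2N complex matrix and l₀ > 0, with the first n edge lengths integer multiples of l₀. If the 2N×2n matrix M_even, obtained from the first 2n columns of U by subtracting 1 from the entries at positions (2j, 2j-1) and (2j-1, 2j) for j = 1,…,n, has rank < 2n, then for every m ∈ ℕ the spectral determinant det[U D₁(k) + D₂(k)] vanishes at k = 2mπ/l₀, and the multiplicity of the corresponding eigenvalue 4m²π²/l₀² is at least 2n - rank(M_even). -/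
open Complex

/-- The block-diagonal matrix `D₁(k)` with `2×2` blocks
`[[-sin(klⱼ/2)+ik cos(klⱼ/2), cos(klⱼ/2)+ik sin(klⱼ/2)],
  [ sin(klⱼ/2)-ik cos(klⱼ/2), cos(klⱼ/2)+ik sin(klⱼ/2)]]`. -/
noncomputable def D1 (N : ℕ) (l : Fin N → ℝ) (k : ℂ) : Matrix (Fin (2 * N)) (Fin (2 * N)) ℂ :=
  Matrix.of fun i c =>
    if (i : ℕ) / 2 = (c : ℕ) / 2 then
      let a : ℂ := k * ((l ⟨(i : ℕ) / 2, by have := i.isLt; omega⟩ : ℝ) : ℂ) / 2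
      if (i : ℕ) % 2 = 0 then
        (if (c : ℕ) % 2 = 0 then -Complex.sin a + Complex.I * k * Complex.cos a
         else Complex.cos a + Complex.I * k * Complex.sin a)
      else
        (if (c : ℕ) % 2 = 0 then Complex.sin a - Complex.I * k * Complex.cos a
         else Complex.cos a + Complex.I * k * Complex.sin a)
    else 0

/-- The block-diagonal matrix `D₂(k)` with `2×2` blocks
`[[ sin(klⱼ/2)+ik cos(klⱼ/2), -cos(klⱼ/2)+ik sin(klⱼ/2)],
  [-sin(klⱼ/2)-ik cos(klⱼ/2), -cos(klⱼ/2)+ik sin(klⱼ/2)]]`. -/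
noncomputable def D2 (N : ℕ) (l : Fin N → ℝ) (k : ℂ) : Matrix (Fin (2 * N)) (Fin (2 * N)) ℂ :=
  Matrix.of fun i c =>
    if (i : ℕ) / 2 = (c : ℕ) / 2 then
      let a : ℂ := k * ((l ⟨(i : ℕ) / 2, by have := i.isLt; omega⟩ : ℝ) : ℂ) / 2
      if (i : ℕ) % 2 = 0 then
        (if (c : ℕ) % 2 = 0 then Complex.sin a + Complex.I * k * Complex.cos a
         else -Complex.cos a + Complex.I * k * Complex.sin a)
      else
        (if (c : ℕ) % 2 = 0 then -Complex.sin a - Complex.I * k * Complex.cos a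
         else -Complex.cos a + Complex.I * k * Complex.sin a)
    else 0

/-- The matrix `M_even`: the first `2n` columns of `U` with `1` subtracted at the
off-diagonal positions of each `2×2` diagonal block (positions `(2j, 2j-1)` and
`(2j-1, 2j)` for `j = 1, …, n`). -/
noncomputable def Meven (N n : ℕ) (U : Matrix (Fin (2 * N)) (Fin (2 * N)) ℂ) (h : 2 * n ≤ 2 * N) :
    Matrix (Fin (2 * N)) (Fin (2 * n)) ℂ :=
  Matrix.of fun i c =>
    U i (Fin.castLE h c) -
      if (i : ℕ) / 2 = (c : ℕ) / 2 ∧ (i : ℕ) ≠ (c : ℕ) then 1 else 0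

/-!
At `k = 2mπ/l₀` every half-phase `klⱼ/2` with `j < n` is a multiple of `π`, so on the first `n`
blocks `D₂ = -P D₁`, where `P` swaps the two rows of each block. Hence the first `2n` columns of
`U D₁ + D₂` are those of `(U - P) D₁`, and since `D₁` is block diagonal they equal `M_even` times
the top-left `2n × 2n` block of `D₁`. They therefore have rank at most `rank M_even`, and the
remaining `2N - 2n` columns add at most `2N - 2n` to the rank.
-/

theorem Matrix.rank_le_rank_submatrix_add_card_sub {R m n ι : Type*} [Field R] [Fintype m]
    [Fintype n] [Fintype ι] (M : Matrix m n R) {e : ι → n} (he : Function.Injective e) :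
    M.rank ≤ (M.submatrix id e).rank + (Fintype.card n - Fintype.card ι) := by
  classical
  have hspan : Submodule.span R (Set.range M.col) ≤
      Submodule.span R (Set.range (M.submatrix id e).col) ⊔
        Submodule.span R (Set.range fun c : ((Set.range e)ᶜ : Set n) => M.col c) := by
    rw [Submodule.span_le]
    rintro _ ⟨c, rfl⟩
    by_cases hc : c ∈ Set.range e
    · obtain ⟨r, rfl⟩ := hc
      exact Submodule.mem_sup_left (Submodule.subset_span ⟨r, rfl⟩)
    · exact Submodule.mem_sup_right (Submodule.subset_span ⟨⟨c, hc⟩, rfl⟩)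
  have hcard : Fintype.card ((Set.range e)ᶜ : Set n) = Fintype.card n - Fintype.card ι := by
    rw [Fintype.card_compl_set, Set.card_range_of_injective he]
  rw [rank_eq_finrank_span_cols, rank_eq_finrank_span_cols]
  calc _ ≤ _ := Submodule.finrank_mono hspan
    _ ≤ _ := Submodule.finrank_add_le_finrank_add_finrank _ _
    _ ≤ _ := by
      gcongr
      exact (finrank_range_le_card _).trans_eq hcard

theorem sin_half_phase_of_commensurate_eq_zero {l₀ : ℝ} (hl₀ : l₀ ≠ 0) (m nj : ℕ) :
    Complex.sin (2 * m * Real.pi / l₀ * ((nj * l₀ : ℝ) : ℂ) / 2) = 0 := by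
  have hl₀' : (l₀ : ℂ) ≠ 0 := by exact_mod_cast hl₀
  have : 2 * m * Real.pi / l₀ * ((nj * l₀ : ℝ) : ℂ) / 2 = ((m * nj : ℕ) : ℂ) * Real.pi := by
    push_cast
    field_simp
  rw [this, Complex.sin_nat_mul_pi]

/-- The other index of the `2×2` block containing `i`, i.e. `i xor 1`. -/
def pairSwap {N : ℕ} (i : Fin (2 * N)) : Fin (2 * N) :=
  ⟨2 * (i / 2) + (1 - i % 2), by omega⟩

def blockSwap (R : Type*) [Zero R] [One R] (N : ℕ) : Matrix (Fin (2 * N)) (Fin (2 * N)) R :=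
  Matrix.of fun i p => if p = pairSwap i then 1 else 0

theorem blockSwap_mul_apply {R : Type*} [NonAssocSemiring R] {N : ℕ} {o : Type*}
    (A : Matrix (Fin (2 * N)) o R) (i : Fin (2 * N)) (c : o) :
    (blockSwap R N * A) i c = A (pairSwap i) c := by
  simp [blockSwap, Matrix.mul_apply]

theorem Meven_eq_submatrix {N n : ℕ} (U : Matrix (Fin (2 * N)) (Fin (2 * N)) ℂ)
    (h : 2 * n ≤ 2 * N) :
    Meven N n U h = (U - blockSwap ℂ N).submatrix id (Fin.castLE h) := by
  ext i c
  have hswap : (i : ℕ) / 2 = (c : ℕ) / 2 ∧ (i : ℕ) ≠ c ↔ Fin.castLE h c = pairSwap i := by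
    simp only [Fin.ext_iff, Fin.val_castLE, pairSwap]
    omega
  simp [Meven, blockSwap, hswap]

theorem D1_apply_of_ne {N : ℕ} (l : Fin N → ℝ) (k : ℂ) {i c : Fin (2 * N)}
    (h : (i : ℕ) / 2 ≠ (c : ℕ) / 2) : D1 N l k i c = 0 := by
  simp [D1, h]

theorem D2_apply_eq_neg_D1_pairSwap {N : ℕ} (l : Fin N → ℝ) (k : ℂ) (i : Fin (2 * N))
    {c : Fin (2 * N)} {j : Fin N} (hj : (j : ℕ) = c / 2) (hs : Complex.sin (k * l j / 2) = 0) :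
    D2 N l k i c = -D1 N l k (pairSwap i) c := by
  have hpi : (pairSwap i : ℕ) / 2 = (i : ℕ) / 2 := by simp only [pairSwap]; omega
  by_cases hic : (i : ℕ) / 2 = c / 2
  · have hblock : ∀ (a : ℕ) (ha : a < N), a = c / 2 → (⟨a, ha⟩ : Fin N) = j :=
      fun _ _ ha => Fin.ext (ha.trans hj.symm)
    simp only [D1, D2, Matrix.of_apply, if_pos hic, hpi, hblock _ _ hic, hs]
    have hpi2 : (pairSwap i : ℕ) % 2 = 1 - (i : ℕ) % 2 := by simp only [pairSwap]; omega
    rcases Nat.mod_two_eq_zero_or_one i with hi | hi <;>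
    rcases Nat.mod_two_eq_zero_or_one c with hc | hc <;>
    simp [hpi2, hi, hc]
  · rw [D1_apply_of_ne l k (hpi.trans_ne hic), neg_zero]
    simp [D2, hic]

theorem mul_D1_add_D2_submatrix_castLE {N n : ℕ} (h : 2 * n ≤ 2 * N)
    (U : Matrix (Fin (2 * N)) (Fin (2 * N)) ℂ) (l : Fin N → ℝ) (k : ℂ)
    (hs : ∀ j : Fin N, (j : ℕ) < n → Complex.sin (k * l j / 2) = 0) :
    (U * D1 N l k + D2 N l k).submatrix id (Fin.castLE h) =
      Meven N n U h * (D1 N l k).submatrix (Fin.castLE h) (Fin.castLE h) := by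
  ext i r
  set c := Fin.castLE h r
  have hD2 : D2 N l k i c = -(blockSwap ℂ N * D1 N l k) i c := by
    rw [blockSwap_mul_apply]
    exact D2_apply_eq_neg_D1_pairSwap l k i (j := ⟨c / 2, by omega⟩) rfl
      (hs _ (by simp only [c, Fin.val_castLE]; omega))
  have hsupp : ∀ p ∉ Set.range (Fin.castLE h), (U - blockSwap ℂ N) i p * D1 N l k p c = 0 := by
    intro p hp
    have hp' : ¬ (p : ℕ) < 2 * n := fun hlt => hp ⟨⟨p, hlt⟩, rfl⟩
    rw [D1_apply_of_ne l k (by simp only [c, Fin.val_castLE]; omega), mul_zero]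
  rw [Matrix.submatrix_apply, id, Matrix.add_apply, hD2, ← sub_eq_add_neg, ← Matrix.sub_apply,
    ← Matrix.sub_mul, Meven_eq_submatrix, Matrix.mul_apply, Matrix.mul_apply]
  exact (Fintype.sum_of_injective _ (Fin.castLE_injective h) _ _ hsupp fun _ => rfl).symm

/-- Theorem 1 of the paper: if `rank M_even < 2n` then for every `m ∈ ℕ` the
spectral determinant vanishes at `k = 2mπ/l₀`, the multiplicity of the
eigenvalue `4m²π²/l₀²` being at least `2n - rank M_even`. -/
theorem embedded_eigenvalues_even
    (N n : ℕ) (hnN : n ≤ N) (l₀ : ℝ) (hl₀ : 0 < l₀)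
    (l : Fin N → ℝ)
    (hl : ∀ j : Fin N, (j : ℕ) < n → ∃ nj : ℕ, 0 < nj ∧ l j = (nj : ℝ) * l₀)
    (U : Matrix (Fin (2 * N)) (Fin (2 * N)) ℂ)
    (hrank : (Meven N n U (by omega)).rank < 2 * n)
    (m : ℕ) (k : ℂ)
    (hk : k = 2 * (m : ℂ) * (Real.pi : ℂ) / (l₀ : ℂ)) :
    (U * D1 N l k + D2 N l k).det = 0 ∧
    2 * n - (Meven N n U (by omega)).rank ≤ 2 * N - (U * D1 N l k + D2 N l k).rank := by
  have h : 2 * n ≤ 2 * N := by omega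
  have hs : ∀ j : Fin N, (j : ℕ) < n → Complex.sin (k * l j / 2) = 0 := by
    intro j hj
    obtain ⟨nj, -, hlj⟩ := hl j hj
    rw [hk, hlj]
    exact sin_half_phase_of_commensurate_eq_zero hl₀.ne' m nj
  have hrankM :
      (U * D1 N l k + D2 N l k).rank ≤ (Meven N n U h).rank + (2 * N - 2 * n) := by
    calc _ ≤ ((U * D1 N l k + D2 N l k).submatrix id (Fin.castLE h)).rank + (2 * N - 2 * n) := by
          simpa using Matrix.rank_le_rank_submatrix_add_card_sub _ (Fin.castLE_injective h)
      _ ≤ _ := by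
          rw [mul_D1_add_D2_submatrix_castLE h U l k hs]
          exact Nat.add_le_add_right (Matrix.rank_mul_le_left _ _) _
  have hdet : (U * D1 N l k + D2 N l k).det = 0 := by
    by_contra hdet
    have hfull := Matrix.rank_of_det_ne_zero hdet
    rw [Fintype.card_fin] at hfull
    omega
  exact ⟨hdet, by omega⟩
end

section
/- Let U = (U₁ U₂; U₃ U₄) be a block matrix with U₁ of size 2N×2N and U₄ of size M×M, and let k ∈ ℂ be such that (1-k)U₄ - (1+k)I is invertible. If vectors f, f' ∈ ℂ^{2N} and g ∈ ℂ^M satisfy (U₁ - I)f + i(U₁+I)f' + (1-k)U₂ g = 0 and U₃ f + iU₃ f' + [(1-k)U₄ - (k+1)I] g = 0, then g = -[(1-k)U₄ - (k+1)I]⁻¹ U₃ (f + if') and the reduced condition (Ũ(k) - I)f + i(Ũ(k)+I)f' = 0 holds, where Ũ(k) = U₁ - (1-k)U₂[(1-k)U₄ - (k+1)I]⁻¹ U₃. -/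
open Matrix

namespace Matrix

variable {m n p : Type*} [Fintype m] [Fintype n] {R : Type*} [CommRing R]

theorem eq_neg_inv_mulVec_of_mulVec_add_mulVec_eq_zero [DecidableEq m]
    {A : Matrix m m R} (hA : IsUnit A.det) {B : Matrix m n R} {x : n → R} {g : m → R}
    (h : B *ᵥ x + A *ᵥ g = 0) :
    g = -(A⁻¹ *ᵥ (B *ᵥ x)) := by
  have hAg : A *ᵥ g = -(B *ᵥ x) := eq_neg_of_add_eq_zero_right h
  calc g = A⁻¹ *ᵥ (A *ᵥ g) := by rw [mulVec_mulVec, nonsing_inv_mul A hA, one_mulVec]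
    _ = -(A⁻¹ *ᵥ (B *ᵥ x)) := by rw [hAg, mulVec_neg]

theorem sub_one_mulVec_add_smul_add_one_mulVec_eq_zero_of_eliminate
    [Fintype p] [DecidableEq n]
    {U₁ : Matrix n n R} {U₂ : Matrix n m R} {K : Matrix m p R} {U₃ : Matrix p n R}
    {z c : R} {f f' : n → R} {g : m → R}
    (h : (U₁ - 1) *ᵥ f + z • ((U₁ + 1) *ᵥ f') + c • (U₂ *ᵥ g) = 0)
    (hg : g = -(K *ᵥ (U₃ *ᵥ (f + z • f')))) :
    (U₁ - c • (U₂ * K * U₃) - 1) *ᵥ f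
      + z • ((U₁ - c • (U₂ * K * U₃) + 1) *ᵥ f')
      = 0 := by
  have hUg : (U₂ * K * U₃) *ᵥ (f + z • f') = -(U₂ *ᵥ g) := by
    rw [hg, mulVec_neg, neg_neg, mulVec_mulVec, mulVec_mulVec]
  rw [← h]
  simp only [sub_mulVec, add_mulVec, smul_mulVec, mulVec_add, mulVec_smul] at hUg ⊢
  linear_combination (norm := module) (-c) • hUg

end Matrix

/-- Elimination of the external variables: for a block coupling matrix
`U = (U₁ U₂; U₃ U₄)` and `k` with `(1-k)U₄ - (1+k)I` invertible, the coupled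
equations determine `g` and yield the effective coupling condition with
`Ũ(k) = U₁ - (1-k)U₂[(1-k)U₄ - (k+1)I]⁻¹U₃`. -/
theorem effective_coupling
    (N M : ℕ)
    (U₁ : Matrix (Fin (2 * N)) (Fin (2 * N)) ℂ) (U₂ : Matrix (Fin (2 * N)) (Fin M) ℂ)
    (U₃ : Matrix (Fin M) (Fin (2 * N)) ℂ) (U₄ : Matrix (Fin M) (Fin M) ℂ)
    (k : ℂ)
    (hinv : IsUnit ((1 - k) • U₄ - (1 + k) • (1 : Matrix (Fin M) (Fin M) ℂ)).det)
    (f f' : Fin (2 * N) → ℂ) (g : Fin M → ℂ)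
    (h1 : (U₁ - 1) *ᵥ f + Complex.I • ((U₁ + 1) *ᵥ f') + (1 - k) • (U₂ *ᵥ g) = 0)
    (h2 : U₃ *ᵥ f + Complex.I • (U₃ *ᵥ f')
        + ((1 - k) • U₄ - (1 + k) • 1) *ᵥ g = 0) :
    g = -(((1 - k) • U₄ - (1 + k) • 1)⁻¹ *ᵥ (U₃ *ᵥ (f + Complex.I • f'))) ∧
    ((U₁ - (1 - k) • (U₂ * ((1 - k) • U₄ - (1 + k) • 1)⁻¹ * U₃) - 1) *ᵥ f
      + Complex.I • ((U₁ - (1 - k) • (U₂ * ((1 - k) • U₄ - (1 + k) • 1)⁻¹ * U₃) + 1) *ᵥ f')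
      = 0) := by
  have hg := eq_neg_inv_mulVec_of_mulVec_add_mulVec_eq_zero hinv
    (B := U₃) (x := f + Complex.I • f') (by rwa [mulVec_add, mulVec_smul])
  exact ⟨hg, sub_one_mulVec_add_smul_add_one_mulVec_eq_zero_of_eliminate h1 hg⟩
end
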